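/- arXiv:2007.12434 — 2 statements merged into one kernel-verified Lean document; each statement's English description precedes it below -/
import Mathlib

section
/- For all connected graphs G and H, each with at least two vertices, q(G □ H) > max(q(G), q(H)). -/
open SimpleGraph Set
open scoped Classical

/-- The degree ratio of a vertex `v` with respect to the partition `(s, sᶜ)`:
the size of its closed neighborhood inside its own side divided by the size of
its closed neighborhood in `G`. -/
noncomputable def vertexRatio {V : Type*} (G : SimpleGraph V) (s : Set V) (v : V) : ℝ :=
  (((G.neighborSet v ∩ (if v ∈ s then s else sᶜ)).ncard : ℝ) + 1) /
    (((G.neighborSet v).ncard : ℝ) + 1)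

/-- The worst (minimum) degree ratio over all vertices, for the partition `(s, sᶜ)`. -/
noncomputable def minRatio {V : Type*} (G : SimpleGraph V) (s : Set V) : ℝ :=
  sInf (Set.range (vertexRatio G s))

/-- The optimal degree ratio `q(G)`: the maximum over all nontrivial partitions
of the worst degree ratio. -/
noncomputable def degreeRatio {V : Type*} (G : SimpleGraph V) : ℝ :=
  sSup { r : ℝ | ∃ s : Set V, s.Nonempty ∧ sᶜ.Nonempty ∧ r = minRatio G s }

/-!
Take a partition `(S, Sᶜ)` of `G` realising `q(G)`; since `G` is connected some edge crosses it,
so `q(G) < 1`. In `G □ H` use the partition `(S × W, Sᶜ × W)`. A vertex `(v, w)` with ratio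
`(a + 1)/(b + 1) ≥ q(G)` in `G` gains its `c = d_H(w) ≥ 1` neighbours of the `H`-fibre, all on
its own side, so its ratio becomes the mediant `(a + 1 + c)/(b + 1 + c)` of `(a + 1)/(b + 1)` and
`c/c = 1`, which exceeds `q(G)` because `q(G) < 1`. The bound for `H` follows from
`G □ H ≃ H □ G`.
-/

section

variable {V W : Type*}

section Partition

variable (G : SimpleGraph V)

lemma minRatio_le_vertexRatio [Finite V] (s : Set V) (v : V) :
    minRatio G s ≤ vertexRatio G s v :=
  csInf_le (finite_range _).bddBelow (mem_range_self v)

lemma exists_minRatio_eq_vertexRatio [Finite V] [Nonempty V] (s : Set V) :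
    ∃ v, minRatio G s = vertexRatio G s v := by
  obtain ⟨v, hv⟩ := (range_nonempty (vertexRatio G s)).csInf_mem (finite_range _)
  exact ⟨v, hv.symm⟩

lemma finite_setOf_minRatio [Finite V] :
    {r : ℝ | ∃ s : Set V, s.Nonempty ∧ sᶜ.Nonempty ∧ r = minRatio G s}.Finite :=
  (finite_range (minRatio G)).subset fun _ ⟨s, _, _, hr⟩ ↦ ⟨s, hr.symm⟩

lemma minRatio_le_degreeRatio [Finite V] {s : Set V} (hs : s.Nonempty) (hs' : sᶜ.Nonempty) :
    minRatio G s ≤ degreeRatio G :=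
  le_csSup (finite_setOf_minRatio G).bddAbove ⟨s, hs, hs', rfl⟩

lemma exists_degreeRatio_eq_minRatio [Finite V] [Nontrivial V] :
    ∃ s : Set V, s.Nonempty ∧ sᶜ.Nonempty ∧ degreeRatio G = minRatio G s := by
  obtain ⟨v, w, hvw⟩ := exists_pair_ne V
  have hne : {r : ℝ | ∃ s : Set V, s.Nonempty ∧ sᶜ.Nonempty ∧ r = minRatio G s}.Nonempty :=
    ⟨_, {v}, singleton_nonempty v, ⟨w, hvw.symm⟩, rfl⟩
  exact hne.csSup_mem (finite_setOf_minRatio G)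

variable {G}

lemma SimpleGraph.Connected.minRatio_lt_one [Finite V] (hG : G.Connected) {s : Set V}
    (hs : s.Nonempty) (hs' : sᶜ.Nonempty) : minRatio G s < 1 := by
  obtain ⟨a, ha⟩ := hs
  obtain ⟨b, hb⟩ := hs'
  obtain ⟨⟨⟨u, u'⟩, hadj⟩, -, hu, hu'⟩ := (hG a b).some.exists_boundary_dart s ha hb
  have hlt : (G.neighborSet u ∩ s).ncard < (G.neighborSet u).ncard :=
    ncard_lt_ncard (inter_ssubset_left_iff.mpr fun h ↦ hu' (h hadj)) (toFinite _)
  refine (minRatio_le_vertexRatio G s u).trans_lt ?_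
  rw [vertexRatio, if_pos hu, div_lt_one (by positivity)]
  exact_mod_cast Nat.add_lt_add_right hlt 1

end Partition

namespace SimpleGraph.Iso

variable {G : SimpleGraph V} {G' : SimpleGraph W}

lemma vertexRatio_apply (e : G ≃g G') (s : Set W) (v : V) :
    vertexRatio G' s (e v) = vertexRatio G (e ⁻¹' s) v := by
  have hcard (X : Set W) : (e ⁻¹' X).ncard = X.ncard :=
    ncard_preimage_of_injective_subset_range e.injective (by simp [e.surjective.range_eq])
  have hN : e ⁻¹' G'.neighborSet (e v) = G.neighborSet v := ext fun _ ↦ e.map_adj_iff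
  rw [vertexRatio, vertexRatio, ← hcard, ← hcard (G'.neighborSet _), preimage_inter, hN,
    apply_ite (e ⁻¹' ·), preimage_compl]
  rfl

lemma minRatio_eq (e : G ≃g G') (s : Set W) : minRatio G' s = minRatio G (e ⁻¹' s) := by
  rw [minRatio, minRatio, ← e.surjective.range_comp]
  simp only [Function.comp_def, e.vertexRatio_apply]

lemma degreeRatio_eq (e : G ≃g G') : degreeRatio G' = degreeRatio G := by
  rw [degreeRatio, degreeRatio]
  congr 1
  ext r
  constructor
  · rintro ⟨s, hs, hs', rfl⟩
    exact ⟨e ⁻¹' s, hs.preimage e.surjective, hs'.preimage e.surjective, e.minRatio_eq s⟩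
  · rintro ⟨t, ht, ht', rfl⟩
    refine ⟨e.symm ⁻¹' t, ht.preimage e.symm.surjective, ht'.preimage e.symm.surjective, ?_⟩
    rw [e.minRatio_eq, ← preimage_comp]
    simp

end SimpleGraph.Iso

section BoxProd

variable {G : SimpleGraph V} {H : SimpleGraph W}

lemma neighborSet_boxProd_inter_prod_univ {v : V} {t : Set V} (hv : v ∈ t) (w : W) :
    (G □ H).neighborSet (v, w) ∩ t ×ˢ univ =
      (G.neighborSet v ∩ t) ×ˢ {w} ∪ {v} ×ˢ H.neighborSet w := by
  rw [neighborSet_boxProd]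
  ext ⟨a, b⟩
  simp only [mem_inter_iff, mem_union, mem_prod, mem_singleton_iff, mem_univ, and_true]
  aesop

lemma ncard_neighborSet_boxProd_inter_prod_univ [Finite V] [Finite W] {v : V} {t : Set V}
    (hv : v ∈ t) (w : W) :
    ((G □ H).neighborSet (v, w) ∩ t ×ˢ univ).ncard =
      (G.neighborSet v ∩ t).ncard + (H.neighborSet w).ncard := by
  have hdisj : Disjoint ((G.neighborSet v ∩ t) ×ˢ {w}) ({v} ×ˢ H.neighborSet w) :=
    disjoint_left.mpr fun _ h₁ h₂ ↦ G.ne_of_adj h₁.1.1 h₂.1.symm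
  rw [neighborSet_boxProd_inter_prod_univ hv, ncard_union_eq hdisj, ncard_prod, ncard_prod,
    ncard_singleton, ncard_singleton, mul_one, one_mul]

lemma vertexRatio_boxProd_prod_univ [Finite V] [Finite W] (s : Set V) (v : V) (w : W) :
    vertexRatio (G □ H) (s ×ˢ univ) (v, w) =
      ((G.neighborSet v ∩ if v ∈ s then s else sᶜ).ncard + 1 + (H.neighborSet w).ncard) /
        ((G.neighborSet v).ncard + 1 + (H.neighborSet w).ncard) := by
  have hN := ncard_neighborSet_boxProd_inter_prod_univ (G := G) (H := H) (mem_univ v) w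
  rw [univ_prod_univ, inter_univ, inter_univ] at hN
  have hcompl : (s ×ˢ univ)ᶜ = sᶜ ×ˢ (univ : Set W) := by simp [compl_prod_eq_union]
  simp only [vertexRatio, mem_prod, mem_univ, and_true]
  split_ifs with hs
  · rw [ncard_neighborSet_boxProd_inter_prod_univ hs, hN]
    push_cast; ring
  · rw [hcompl, ncard_neighborSet_boxProd_inter_prod_univ (show v ∈ sᶜ from hs), hN]
    push_cast; ring

end BoxProd

lemma lt_add_div_add_of_le_div {q x y c : ℝ} (hy : 0 < y) (hc : 0 < c) (hq : q < 1)
    (h : q ≤ x / y) : q < (x + c) / (y + c) := by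
  rw [le_div_iff₀ hy] at h
  rw [lt_div_iff₀ (by positivity)]
  nlinarith

lemma degreeRatio_lt_degreeRatio_boxProd [Finite V] [Finite W] [Nontrivial V] [Nonempty W]
    {G : SimpleGraph V} {H : SimpleGraph W} (hG : G.Connected) (hH : ∀ w, ¬ H.IsIsolated w) :
    degreeRatio G < degreeRatio (G □ H) := by
  obtain ⟨s, ⟨a, ha⟩, ⟨b, hb⟩, hq⟩ := exists_degreeRatio_eq_minRatio G
  have hq1 : degreeRatio G < 1 := hq ▸ hG.minRatio_lt_one ⟨a, ha⟩ ⟨b, hb⟩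
  obtain ⟨w₀⟩ := ‹Nonempty W›
  refine lt_of_lt_of_le ?_ (minRatio_le_degreeRatio (G □ H) (s := s ×ˢ univ)
    ⟨(a, w₀), ha, mem_univ _⟩ ⟨(b, w₀), fun h ↦ hb h.1⟩)
  obtain ⟨⟨v, w⟩, hvw⟩ := exists_minRatio_eq_vertexRatio (G □ H) (s ×ˢ univ)
  have hdeg : 0 < (H.neighborSet w).ncard :=
    (ncard_pos (toFinite _)).mpr (H.neighborSet_nonempty.mpr (hH w))
  rw [hvw, vertexRatio_boxProd_prod_univ]
  exact lt_add_div_add_of_le_div (by positivity) (by exact_mod_cast hdeg) hq1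
    (hq ▸ minRatio_le_vertexRatio G s v)

end

theorem stmt_16 {V W : Type*} [Fintype V] [Fintype W]
    (G : SimpleGraph V) (H : SimpleGraph W)
    (hG : G.Connected) (hH : H.Connected) (hV : Nontrivial V) (hW : Nontrivial W) :
    max (degreeRatio G) (degreeRatio H) < degreeRatio (G □ H) := by
  refine max_lt (degreeRatio_lt_degreeRatio_boxProd hG hH.preconnected.not_isIsolated) ?_
  rw [(boxProdComm H G).degreeRatio_eq]
  exact degreeRatio_lt_degreeRatio_boxProd hH hG.preconnected.not_isIsolated
end

section
/- Let G be a k-regular connected graph and H a tree with at least two vertices. Then q(G □ H) = max_{uv ∈ E(H)} min{(d_H(u)+k)/(d_H(u)+k+1), (d_H(v)+k)/(d_H(v)+k+1)}. -/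
open SimpleGraph Set
open scoped Classical

/-! For an edge `uv` of the tree `H`, deleting `uv` splits `H` into two sides, and the induced
partition of `G □ H` is crossed only by the edges `(g, u)(g, v)`. Every vertex then has at most one
neighbour across, so this partition has minimum ratio at least `min (f u) (f v)`, where
`f w = (d_H(w) + k) / (d_H(w) + k + 1)`. Conversely, a nontrivial partition of `G □ H` either cuts
some copy of `H`, hence an edge `(g, w)(g, w')` whose endpoints have ratios at most `f w` and
`f w'`, or leaves every copy of `H` on one side; it then cuts the copy of `G` over a vertex `w` of
minimum degree in `H`, and `f w = min (f w) (f w')` for any neighbour `w'` of `w`. -/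

-- The degree ratio of a vertex of degree `d` with exactly one neighbour across the partition.
noncomputable def boundaryRatio (d : ℝ) : ℝ := d / (d + 1)

lemma boundaryRatio_le_one {d : ℝ} (hd : 0 ≤ d) : boundaryRatio d ≤ 1 :=
  div_le_one_of_le₀ (by linarith) (by linarith)

lemma boundaryRatio_le_boundaryRatio {a b : ℝ} (ha : 0 ≤ a) (hab : a ≤ b) :
    boundaryRatio a ≤ boundaryRatio b := by
  unfold boundaryRatio
  rw [div_le_div_iff₀ (by linarith) (by linarith)]
  linarith

namespace SimpleGraph

section DegreeRatio

variable {V : Type*} {G : SimpleGraph V} {s : Set V} {x y : V}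

lemma mem_ite_self_compl_iff {z : V} : z ∈ (if x ∈ s then s else sᶜ) ↔ (z ∈ s ↔ x ∈ s) := by
  split_ifs with hx <;> simp [hx]

lemma vertexRatio_nonneg (G : SimpleGraph V) (s : Set V) (x : V) : 0 ≤ vertexRatio G s x := by
  unfold vertexRatio
  positivity

lemma vertexRatio_le_one [Finite V] (G : SimpleGraph V) (s : Set V) (x : V) :
    vertexRatio G s x ≤ 1 := by
  rw [vertexRatio, div_le_one (by positivity)]
  gcongr
  · exact Set.toFinite _
  · exact Set.inter_subset_left

lemma vertexRatio_eq_one (h : ∀ z, G.Adj x z → (z ∈ s ↔ x ∈ s)) : vertexRatio G s x = 1 := by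
  have hside : G.neighborSet x ∩ (if x ∈ s then s else sᶜ) = G.neighborSet x :=
    Set.inter_eq_left.mpr fun z hz => mem_ite_self_compl_iff.mpr (h z hz)
  rw [vertexRatio, hside, div_self (by positivity)]

lemma boundaryRatio_le_vertexRatio [Finite V] (h : ∀ z, G.Adj x z → z ≠ y → (z ∈ s ↔ x ∈ s)) :
    boundaryRatio (G.neighborSet x).ncard ≤ vertexRatio G s x := by
  have hsub : G.neighborSet x \ {y} ⊆ G.neighborSet x ∩ (if x ∈ s then s else sᶜ) :=
    fun z ⟨hz, hzy⟩ => ⟨hz, mem_ite_self_compl_iff.mpr (h z hz hzy)⟩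
  have hcard :
      (G.neighborSet x).ncard ≤ (G.neighborSet x ∩ (if x ∈ s then s else sᶜ)).ncard + 1 := by
    have := (Set.pred_ncard_le_ncard_sdiff_singleton (G.neighborSet x) y).trans
      (Set.ncard_le_ncard hsub (Set.toFinite _))
    omega
  unfold boundaryRatio vertexRatio
  gcongr
  exact_mod_cast hcard

lemma vertexRatio_le_boundaryRatio [Finite V] (hxy : G.Adj x y) (hy : ¬(y ∈ s ↔ x ∈ s)) :
    vertexRatio G s x ≤ boundaryRatio (G.neighborSet x).ncard := by
  have hcard : (G.neighborSet x ∩ (if x ∈ s then s else sᶜ)).ncard + 1 ≤ (G.neighborSet x).ncard :=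
    Set.ncard_lt_ncard
      ⟨Set.inter_subset_left, fun hsub => hy (mem_ite_self_compl_iff.mp (hsub hxy).2)⟩
      (Set.toFinite _)
  unfold boundaryRatio vertexRatio
  gcongr
  exact_mod_cast hcard

lemma minRatio_le_vertexRatio (G : SimpleGraph V) (s : Set V) (x : V) :
    minRatio G s ≤ vertexRatio G s x :=
  csInf_le ⟨0, by rintro r ⟨z, rfl⟩; exact vertexRatio_nonneg G s z⟩ ⟨x, rfl⟩

lemma le_minRatio [Nonempty V] {c : ℝ} (h : ∀ x, c ≤ vertexRatio G s x) : c ≤ minRatio G s :=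
  le_csInf (Set.range_nonempty _) (by rintro r ⟨x, rfl⟩; exact h x)

lemma minRatio_le_of_adj [Finite V] (hxy : G.Adj x y) (hx : x ∈ s) (hy : y ∉ s) :
    minRatio G s ≤ min (boundaryRatio (G.neighborSet x).ncard)
      (boundaryRatio (G.neighborSet y).ncard) :=
  le_min ((minRatio_le_vertexRatio G s x).trans (vertexRatio_le_boundaryRatio hxy (by tauto)))
    ((minRatio_le_vertexRatio G s y).trans (vertexRatio_le_boundaryRatio hxy.symm (by tauto)))

lemma bddAbove_minRatio [Finite V] [Nonempty V] (G : SimpleGraph V) :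
    BddAbove { r : ℝ | ∃ s : Set V, s.Nonempty ∧ sᶜ.Nonempty ∧ r = minRatio G s } := by
  refine ⟨1, ?_⟩
  rintro r ⟨s, -, -, rfl⟩
  exact (minRatio_le_vertexRatio G s (Classical.arbitrary V)).trans (vertexRatio_le_one G s _)

lemma minRatio_le_degreeRatio [Finite V] (hs : s.Nonempty) (hsc : sᶜ.Nonempty) :
    minRatio G s ≤ degreeRatio G :=
  have : Nonempty V := hs.to_subtype.map Subtype.val
  le_csSup (bddAbove_minRatio G) ⟨s, hs, hsc, rfl⟩

lemma degreeRatio_le [Nontrivial V] {c : ℝ}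
    (h : ∀ s : Set V, s.Nonempty → sᶜ.Nonempty → minRatio G s ≤ c) : degreeRatio G ≤ c := by
  obtain ⟨a, b, hab⟩ := exists_pair_ne V
  refine csSup_le ⟨_, {a}, Set.singleton_nonempty a, ⟨b, hab.symm⟩, rfl⟩ ?_
  rintro r ⟨s, hs, hsc, rfl⟩
  exact h s hs hsc

end DegreeRatio

lemma Preconnected.exists_adj_mem_not_mem {V : Type*} {G : SimpleGraph V} (hG : G.Preconnected)
    {S : Set V} {a b : V} (ha : a ∈ S) (hb : b ∉ S) : ∃ x y, G.Adj x y ∧ x ∈ S ∧ y ∉ S := by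
  obtain ⟨p⟩ := hG a b
  obtain ⟨d, -, hd⟩ := p.exists_boundary_dart S ha hb
  exact ⟨d.fst, d.snd, d.adj, hd⟩

lemma Preconnected.exists_adj_forall_adj_le {V : Type*} [Finite V] [Nontrivial V]
    {G : SimpleGraph V} (hG : G.Preconnected) (f : V → V → ℝ) :
    ∃ u v, G.Adj u v ∧ ∀ ⦃u' v'⦄, G.Adj u' v' → f u' v' ≤ f u v := by
  obtain ⟨a⟩ := ‹Nontrivial V›.to_nonempty
  obtain ⟨b, hab⟩ := hG.exists_adj_of_nontrivial a
  obtain ⟨⟨u, v⟩, huv, hmax⟩ := Set.exists_max_image {p : V × V | G.Adj p.1 p.2}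
    (fun p => f p.1 p.2) (Set.toFinite _) ⟨(a, b), hab⟩
  exact ⟨u, v, huv, fun u' v' h => hmax (u', v') h⟩

lemma IsAcyclic.exists_cut_of_adj {W : Type*} {H : SimpleGraph W} (hH : H.IsAcyclic) {u v : W}
    (huv : H.Adj u v) :
    ∃ A : Set W, u ∈ A ∧ v ∉ A ∧ ∀ ⦃w w'⦄, H.Adj w w' → w ∈ A → w' ∉ A → w = u ∧ w' = v := by
  set H' := H.deleteEdges {s(u, v)}
  have hbridge : ¬ H'.Reachable u v := isBridge_iff.mp (isAcyclic_iff_forall_adj_isBridge.mp hH huv)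
  refine ⟨{w | H'.Reachable u w}, Reachable.refl u, hbridge, fun w w' hww' hw hw' => ?_⟩
  by_contra hne
  refine hw' (hw.trans (Adj.reachable ((deleteEdges_adj).mpr ⟨hww', fun he => ?_⟩)))
  rcases Sym2.eq_iff.mp (Set.mem_singleton_iff.mp he) with ⟨rfl, rfl⟩ | ⟨rfl, rfl⟩
  · exact hne ⟨rfl, rfl⟩
  · exact hbridge hw

section BoxProd

variable {V W : Type*} {G : SimpleGraph V} {H : SimpleGraph W}

noncomputable def boxBoundaryRatio (H : SimpleGraph W) (k : ℕ) (w : W) : ℝ :=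
  boundaryRatio ((H.neighborSet w).ncard + k)

lemma boxBoundaryRatio_le_one (H : SimpleGraph W) (k : ℕ) (w : W) : boxBoundaryRatio H k w ≤ 1 :=
  boundaryRatio_le_one (by positivity)

lemma ncard_neighborSet_boxProd [Finite V] [Finite W] (x : V × W) :
    ((G □ H).neighborSet x).ncard = (G.neighborSet x.1).ncard + (H.neighborSet x.2).ncard := by
  classical
  have := Fintype.ofFinite V
  have := Fintype.ofFinite W
  simp only [← Nat.card_coe_set_eq, Nat.card_eq_fintype_card, card_neighborSet_eq_degree,
    degree_boxProd]

lemma boundaryRatio_boxProd [Fintype V] [Finite W] [DecidableRel G.Adj] {k : ℕ}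
    (hreg : G.IsRegularOfDegree k) (x : V × W) :
    boundaryRatio ((G □ H).neighborSet x).ncard = boxBoundaryRatio H k x.2 := by
  rw [ncard_neighborSet_boxProd, ← Nat.card_coe_set_eq, Nat.card_eq_fintype_card,
    card_neighborSet_eq_degree, hreg x.1, boxBoundaryRatio, add_comm]
  push_cast
  rfl

lemma boxBoundaryRatio_le_boxBoundaryRatio (k : ℕ) {w w' : W}
    (h : (H.neighborSet w).ncard ≤ (H.neighborSet w').ncard) :
    boxBoundaryRatio H k w ≤ boxBoundaryRatio H k w' :=
  boundaryRatio_le_boundaryRatio (by positivity) (by gcongr)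

lemma boxProd_adj_fst_eq_of_not_snd_mem_iff {x z : V × W} {A : Set W} (hxz : (G □ H).Adj x z)
    (hside : ¬(z.2 ∈ A ↔ x.2 ∈ A)) : z.1 = x.1 ∧ H.Adj x.2 z.2 := by
  rcases boxProd_adj.mp hxz with ⟨-, h⟩ | ⟨hadj, h⟩
  · exact absurd (h ▸ Iff.rfl) hside
  · exact ⟨h.symm, hadj⟩

lemma min_boxBoundaryRatio_le_vertexRatio [Fintype V] [Finite W] [DecidableRel G.Adj] {k : ℕ}
    (hreg : G.IsRegularOfDegree k) {A : Set W} {u v : W}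
    (hcut : ∀ ⦃w w'⦄, H.Adj w w' → w ∈ A → w' ∉ A → w = u ∧ w' = v) (x : V × W) :
    min (boxBoundaryRatio H k u) (boxBoundaryRatio H k v) ≤
      vertexRatio (G □ H) (Prod.snd ⁻¹' A) x := by
  obtain ⟨g, w⟩ := x
  have hcross : ∀ z, (G □ H).Adj (g, w) z → ¬(z.2 ∈ A ↔ w ∈ A) →
      z.1 = g ∧ (w = u ∧ z.2 = v ∨ w = v ∧ z.2 = u) := by
    intro z hz hside
    obtain ⟨hz₁, hwz⟩ := boxProd_adj_fst_eq_of_not_snd_mem_iff hz hside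
    refine ⟨hz₁, ?_⟩
    by_cases hw : w ∈ A
    · exact .inl (hcut hwz hw (by tauto))
    · exact .inr (hcut hwz.symm (by tauto) hw).symm
  have hend : ∀ y, (∀ z, (G □ H).Adj (g, w) z → ¬(z.2 ∈ A ↔ w ∈ A) → z.2 = y) →
      boxBoundaryRatio H k w ≤ vertexRatio (G □ H) (Prod.snd ⁻¹' A) (g, w) := by
    intro y hy
    rw [← boundaryRatio_boxProd hreg (g, w)]
    exact boundaryRatio_le_vertexRatio (y := (g, y)) fun z hz hzy =>
      by_contra fun hside => hzy (Prod.ext (hcross z hz hside).1 (hy z hz hside))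
  rcases eq_or_ne w u with rfl | hwu
  · refine (min_le_left _ _).trans (hend v fun z hz hside => ?_)
    rcases (hcross z hz hside).2 with ⟨-, h⟩ | ⟨rfl, h⟩ <;> exact h
  rcases eq_or_ne w v with rfl | hwv
  · refine (min_le_right _ _).trans (hend u fun z hz hside => ?_)
    exact ((hcross z hz hside).2.resolve_left fun h => hwu h.1).2
  have hsame : ∀ z, (G □ H).Adj (g, w) z → (z.2 ∈ A ↔ w ∈ A) := fun z hz =>
    by_contra fun hside => by rcases (hcross z hz hside).2 with ⟨h, -⟩ | ⟨h, -⟩ <;> contradiction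
  rw [vertexRatio_eq_one (s := Prod.snd ⁻¹' A) hsame]
  exact (min_le_left _ _).trans (boxBoundaryRatio_le_one H k u)

lemma exists_adj_minRatio_boxProd_le [Fintype V] [Finite W] [Nontrivial W] [DecidableRel G.Adj]
    {k : ℕ} (hG : G.Preconnected) (hreg : G.IsRegularOfDegree k) (hH : H.Preconnected)
    {s : Set (V × W)} (hs : s.Nonempty) (hsc : sᶜ.Nonempty) :
    ∃ u v, H.Adj u v ∧
      minRatio (G □ H) s ≤ min (boxBoundaryRatio H k u) (boxBoundaryRatio H k v) := by
  by_cases hfiber : ∃ g w w', H.Adj w w' ∧ (g, w) ∈ s ∧ (g, w') ∉ s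
  · obtain ⟨g, w, w', hww', hin, hout⟩ := hfiber
    refine ⟨w, w', hww', ?_⟩
    simpa only [boundaryRatio_boxProd hreg] using
      minRatio_le_of_adj (boxProd_adj_right (G := G).mpr hww') hin hout
  push Not at hfiber
  have hcopy : ∀ g w w', (g, w) ∈ s → (g, w') ∈ s := fun g w w' hw => by
    by_contra hw'
    obtain ⟨a, b, hab, ha, hb⟩ := hH.exists_adj_mem_not_mem (S := {x | (g, x) ∈ s}) hw hw'
    exact hb (hfiber g a b hab ha)
  obtain ⟨wm, hwm⟩ := Finite.exists_min fun w => (H.neighborSet w).ncard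
  obtain ⟨w', hw'⟩ := hH.exists_adj_of_nontrivial wm
  obtain ⟨⟨g₁, w₁⟩, h₁⟩ := hs
  obtain ⟨⟨g₂, w₂⟩, h₂⟩ := hsc
  obtain ⟨a, b, hab, ha, hb⟩ := hG.exists_adj_mem_not_mem (S := {g | (g, wm) ∈ s})
    (hcopy _ _ _ h₁) fun h => h₂ (hcopy _ _ _ h)
  refine ⟨wm, w', hw', ?_⟩
  have hle := minRatio_le_of_adj (boxProd_adj_left (H := H).mpr hab) ha hb
  rw [boundaryRatio_boxProd hreg, boundaryRatio_boxProd hreg, min_self] at hle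
  exact hle.trans (le_min le_rfl (boxBoundaryRatio_le_boxBoundaryRatio k (hwm w')))

end BoxProd

end SimpleGraph

theorem stmt_18 {V W : Type*} [Fintype V] [Fintype W]
    (G : SimpleGraph V) (H : SimpleGraph W) (k : ℕ) [DecidableRel G.Adj]
    (hG : G.Connected) (hreg : G.IsRegularOfDegree k)
    (hH : H.IsTree) (hW : Nontrivial W) :
    (∃ u v, H.Adj u v ∧ degreeRatio (G □ H) =
        min ((((H.neighborSet u).ncard : ℝ) + k) / (((H.neighborSet u).ncard : ℝ) + k + 1))
            ((((H.neighborSet v).ncard : ℝ) + k) / (((H.neighborSet v).ncard : ℝ) + k + 1))) ∧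
    (∀ u v, H.Adj u v →
        min ((((H.neighborSet u).ncard : ℝ) + k) / (((H.neighborSet u).ncard : ℝ) + k + 1))
            ((((H.neighborSet v).ncard : ℝ) + k) / (((H.neighborSet v).ncard : ℝ) + k + 1))
          ≤ degreeRatio (G □ H)) := by
  obtain ⟨g⟩ := hG.nonempty
  have : Nonempty V := ⟨g⟩
  have hlower : ∀ u v, H.Adj u v →
      min (boxBoundaryRatio H k u) (boxBoundaryRatio H k v) ≤ degreeRatio (G □ H) := by
    intro u v huv
    obtain ⟨A, hu, hv, hcut⟩ := hH.isAcyclic.exists_cut_of_adj huv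
    exact (le_minRatio (min_boxBoundaryRatio_le_vertexRatio hreg hcut)).trans
      (minRatio_le_degreeRatio ⟨(g, u), hu⟩ ⟨(g, v), hv⟩)
  obtain ⟨u, v, huv, hmax⟩ := hH.1.preconnected.exists_adj_forall_adj_le
    fun u v => min (boxBoundaryRatio H k u) (boxBoundaryRatio H k v)
  refine ⟨⟨u, v, huv, le_antisymm (degreeRatio_le fun s hs hsc => ?_) (hlower u v huv)⟩, hlower⟩
  obtain ⟨u', v', huv', hle⟩ :=
    exists_adj_minRatio_boxProd_le hG.preconnected hreg hH.1.preconnected hs hsc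
  exact hle.trans (hmax huv')
end
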